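/- arXiv:2409.10395 — 2 statements merged into one kernel-verified Lean document; each statement's English description precedes it below -/
import Mathlib

section
/- Let α ∈ (0,1] and assume a leximin-optimal distribution exists in X. A distribution x^A ∈ X is an α-leximin-approximation if and only if E(x^A) ≽ E(x) for all x ∈ X_{≤α}. -/
/-! Since every agent gets utility `0` in the degenerate state, rescaling the non-degenerate
mass of a distribution by `c` and dumping the remainder on `s_d` scales every expected utility
by `c`. Upgrading by `1/α` maps `X_{≤α}` into `X` and downgrading by `α` maps `X` into
`X_{≤α}`, so `{α • E(x) | x ∈ X} = {E(x) | x ∈ X_{≤α}}` and the two conditions coincide. -/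

open Finset

/-- The vector `v` sorted in non-decreasing order: `sortedVec v i` is the
`i`-th smallest entry of `v` (counting repetitions). -/
noncomputable def sortedVec {n : ℕ} (v : Fin n → ℝ) : Fin n → ℝ := v ∘ Tuple.sort v

/-- The sum of the `k` smallest entries of `v`. -/
noncomputable def sumSmallest {n : ℕ} (v : Fin n → ℝ) (k : ℕ) : ℝ :=
  ∑ i ∈ Finset.univ.filter (fun i : Fin n => (i : ℕ) < k), sortedVec v i

/-- `v` is weakly leximin-preferred over `w`. -/
def LeximinPref {n : ℕ} (v w : Fin n → ℝ) : Prop :=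
  sortedVec v = sortedVec w ∨
    ∃ k : Fin n, (∀ i, i < k → sortedVec v i = sortedVec w i) ∧ sortedVec w k < sortedVec v k

/-- `v` is strictly leximin-preferred over `w`. -/
def LeximinStrict {n : ℕ} (v w : Fin n → ℝ) : Prop :=
  ∃ k : Fin n, (∀ i, i < k → sortedVec v i = sortedVec w i) ∧ sortedVec w k < sortedVec v k

/-- `x` is a probability distribution over the (finite) set of states `S`. -/
def IsDistribution {S : Type*} [Fintype S] (x : S → ℝ) : Prop :=
  (∀ s, 0 ≤ x s) ∧ ∑ s, x s = 1

/-- The expected utility of each agent under the (sub)distribution `x`. -/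
noncomputable def expU {n : ℕ} {S : Type*} [Fintype S] (u : Fin n → S → ℝ) (x : S → ℝ) :
    Fin n → ℝ := fun i => ∑ s, x s * u i s

/-- Membership in `X_{≤α}`: a distribution that puts at most `α` total probability
on the non-degenerate states. -/
def InXle {S : Type*} [Fintype S] [DecidableEq S] (α : ℝ) (sd : S) (x : S → ℝ) : Prop :=
  IsDistribution x ∧ ∑ j ∈ Finset.univ.erase sd, x j ≤ α

/-- The α-upgrade of a distribution `x` (w.r.t. the degenerate state `sd`). -/
noncomputable def upg {S : Type*} [Fintype S] [DecidableEq S] (α : ℝ) (sd : S) (x : S → ℝ) :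
    S → ℝ :=
  fun s => if s = sd then 1 - (1 / α) * ∑ j ∈ Finset.univ.erase sd, x j else (1 / α) * x s

/-- The α-downgrade of a distribution `x` (w.r.t. the degenerate state `sd`). -/
noncomputable def dng {S : Type*} [Fintype S] [DecidableEq S] (α : ℝ) (sd : S) (x : S → ℝ) :
    S → ℝ :=
  fun s => if s = sd then 1 - α * ∑ j ∈ Finset.univ.erase sd, x j else α * x s

section DegenerateState

variable {n : ℕ} {S : Type*} [Fintype S] [DecidableEq S]

lemma sum_erase_ite_eq (sd : S) (r : ℝ) (f : S → ℝ) :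
    ∑ s ∈ univ.erase sd, (if s = sd then r else f s) = ∑ s ∈ univ.erase sd, f s :=
  sum_congr rfl fun _ hs => if_neg (ne_of_mem_erase hs)

lemma sum_ite_eq_add_sum_erase (sd : S) (r : ℝ) (f : S → ℝ) :
    ∑ s, (if s = sd then r else f s) = r + ∑ s ∈ univ.erase sd, f s := by
  rw [← add_sum_erase _ _ (mem_univ sd), if_pos rfl, sum_erase_ite_eq]

lemma IsDistribution.add_sum_erase {x : S → ℝ} (hx : IsDistribution x) (sd : S) :
    x sd + ∑ s ∈ univ.erase sd, x s = 1 := by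
  rw [Finset.add_sum_erase _ _ (mem_univ sd)]
  exact hx.2

lemma expU_ite_eq_mul (sd : S) {u : Fin n → S → ℝ} (hud : ∀ i, u i sd = 0) (r c : ℝ)
    (x : S → ℝ) :
    expU u (fun s => if s = sd then r else c * x s) = fun i => c * expU u x i := by
  funext i
  simp only [expU, mul_sum]
  refine sum_congr rfl fun s _ => ?_
  split_ifs with hs
  · rw [hs, hud, mul_zero, mul_zero, mul_zero]
  · ring

lemma isDistribution_upg {α : ℝ} (hα : 0 < α) {sd : S} {x : S → ℝ} (hx : InXle α sd x) :
    IsDistribution (upg α sd x) := by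
  obtain ⟨⟨hx0, -⟩, hxα⟩ := hx
  refine ⟨fun s => ?_, ?_⟩
  · unfold upg
    split_ifs
    · have : 1 / α * ∑ j ∈ univ.erase sd, x j ≤ 1 := by
        rw [one_div_mul_eq_div, div_le_one hα]
        exact hxα
      linarith
    · exact mul_nonneg (by positivity) (hx0 s)
  · unfold upg
    rw [sum_ite_eq_add_sum_erase, ← mul_sum]
    ring

lemma inXle_dng {α : ℝ} (hα0 : 0 ≤ α) (hα1 : α ≤ 1) (sd : S) {x : S → ℝ}
    (hx : IsDistribution x) : InXle α sd (dng α sd x) := by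
  have hsum_le_one : ∑ j ∈ univ.erase sd, x j ≤ 1 := by
    linarith [hx.1 sd, hx.add_sum_erase sd]
  have hdng_erase : ∑ j ∈ univ.erase sd, dng α sd x j = α * ∑ j ∈ univ.erase sd, x j := by
    unfold dng
    rw [sum_erase_ite_eq, mul_sum]
  have hdng_mass : α * ∑ j ∈ univ.erase sd, x j ≤ α := mul_le_of_le_one_right hα0 hsum_le_one
  refine ⟨⟨fun s => ?_, ?_⟩, hdng_erase ▸ hdng_mass⟩
  · unfold dng
    split_ifs
    · linarith
    · exact mul_nonneg hα0 (hx.1 s)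
  · unfold dng
    rw [sum_ite_eq_add_sum_erase, ← mul_sum]
    ring

lemma mul_expU_upg (sd : S) {u : Fin n → S → ℝ} (hud : ∀ i, u i sd = 0) {α : ℝ} (hα : α ≠ 0)
    (x : S → ℝ) : (fun i => α * expU u (upg α sd x) i) = expU u x := by
  funext i
  unfold upg
  rw [expU_ite_eq_mul sd hud, ← mul_assoc, mul_one_div_cancel hα, one_mul]

lemma expU_dng (sd : S) {u : Fin n → S → ℝ} (hud : ∀ i, u i sd = 0) (α : ℝ) (x : S → ℝ) :
    expU u (dng α sd x) = fun i => α * expU u x i :=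
  expU_ite_eq_mul sd hud _ α x

end DegenerateState

theorem stmt9_general {n : ℕ} {S : Type*} [Fintype S] [DecidableEq S]
    (sd : S) (u : Fin n → S → ℝ) (hud : ∀ i, u i sd = 0)
    (α : ℝ) (hα0 : 0 < α) (hα1 : α ≤ 1)
    (xA : S → ℝ) :
    (∀ x : S → ℝ, IsDistribution x →
        LeximinPref (expU u xA) (fun i => α * expU u x i)) ↔
      (∀ x : S → ℝ, InXle α sd x → LeximinPref (expU u xA) (expU u x)) := by
  constructor
  · intro h x hx
    simpa only [mul_expU_upg sd hud hα0.ne'] using h _ (isDistribution_upg hα0 hx)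
  · intro h x hx
    simpa only [expU_dng sd hud] using h _ (inXle_dng hα0.le hα1 sd hx)

/-- assuming a leximin-optimal distribution exists, `xA` is an
α-leximin-approximation iff it leximin-dominates every element of `X_{≤α}`. -/
theorem stmt9 {n : ℕ} (hn : 1 ≤ n) {S : Type*} [Fintype S] [DecidableEq S]
    (sd : S) (u : Fin n → S → ℝ) (hu : ∀ i s, 0 ≤ u i s) (hud : ∀ i, u i sd = 0)
    (α : ℝ) (hα0 : 0 < α) (hα1 : α ≤ 1)
    (hex : ∃ xstar : S → ℝ, IsDistribution xstar ∧
      ∀ x : S → ℝ, IsDistribution x → LeximinPref (expU u xstar) (expU u x))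
    (xA : S → ℝ) (hxA : IsDistribution xA) :
    (∀ x : S → ℝ, IsDistribution x →
        LeximinPref (expU u xA) (fun i => α * expU u x i)) ↔
      (∀ x : S → ℝ, InXle α sd x → LeximinPref (expU u xA) (expU u x)) :=
  stmt9_general sd u hud α hα0 hα1 xA
end

section
/- Let α ∈ (0,1]. Say that x is α-preferred over x' (written x ≻_α x') if there exists k ∈ {1,…,n} such that E(x)^↑_i ≥ E(x')^↑_i for all i < k and E(x)^↑_k > (1/α)·E(x')^↑_k; and say x' is a Hartman-et-al. α-leximin-approximation if there is no x ∈ X with x ≻_α x'. Then every Hartman-et-al. α-leximin-approximation x' ∈ X is also an α-leximin-approximation, i.e., E(x') ≽ α·E(x) for all x ∈ X. -/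
/-!
Leximin comparison of sorted vectors is the lexicographic order on `Lex (Fin n → ℝ)`, which is
linear; so if `E(x')` failed to dominate `α • E(x)`, there would be a first sorted position `k`
where `E(x')` falls strictly below `α • E(x)` while agreeing with it before `k`. Since utilities
are nonnegative and `α ≤ 1`, agreement with `α • E(x)` gives `≤ E(x)` before `k`, and dividing
by `α` at `k` shows that `x` is `α`-preferred over `x'`.
-/

open Finset

lemma sortedVec_const_mul {n : ℕ} (v : Fin n → ℝ) {c : ℝ} (hc : 0 ≤ c) :
    sortedVec (fun i => c * v i) = fun i => c * sortedVec v i := by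
  have hmono : Monotone ((fun i => c * v i) ∘ Tuple.sort v) := fun a b hab =>
    mul_le_mul_of_nonneg_left (Tuple.monotone_sort v hab) hc
  exact (Tuple.comp_sort_eq_comp_iff_monotone.mpr hmono).symm

lemma leximinStrict_iff_toLex_lt {n : ℕ} (v w : Fin n → ℝ) :
    LeximinStrict v w ↔ toLex (sortedVec w) < toLex (sortedVec v) :=
  exists_congr fun _ => and_congr (forall₂_congr fun _ _ => eq_comm) Iff.rfl

lemma leximinPref_iff_toLex_le {n : ℕ} (v w : Fin n → ℝ) :
    LeximinPref v w ↔ toLex (sortedVec w) ≤ toLex (sortedVec v) := by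
  rw [le_iff_eq_or_lt, eq_comm, toLex_inj]
  exact or_congr Iff.rfl (leximinStrict_iff_toLex_lt v w)

lemma leximinStrict_of_not_leximinPref {n : ℕ} {v w : Fin n → ℝ} (h : ¬ LeximinPref v w) :
    LeximinStrict w v :=
  (leximinStrict_iff_toLex_lt w v).2 (not_le.1 ((leximinPref_iff_toLex_le v w).not.1 h))

lemma expU_nonneg {n : ℕ} {S : Type*} [Fintype S] {u : Fin n → S → ℝ} (hu : ∀ i s, 0 ≤ u i s)
    {x : S → ℝ} (hx : ∀ s, 0 ≤ x s) (i : Fin n) : 0 ≤ expU u x i :=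
  Finset.sum_nonneg fun s _ => mul_nonneg (hx s) (hu i s)

lemma sortedVec_nonneg {n : ℕ} {v : Fin n → ℝ} (hv : ∀ i, 0 ≤ v i) (i : Fin n) :
    0 ≤ sortedVec v i :=
  hv _

theorem stmt17_general {n : ℕ} {S : Type*} [Fintype S]
    (u : Fin n → S → ℝ) (hu : ∀ i s, 0 ≤ u i s)
    (α : ℝ) (hα0 : 0 < α) (hα1 : α ≤ 1)
    (x' : S → ℝ)
    (hH : ¬ ∃ x : S → ℝ, IsDistribution x ∧ ∃ k : Fin n,
        (∀ i, i < k → sortedVec (expU u x') i ≤ sortedVec (expU u x) i) ∧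
        (1 / α) * sortedVec (expU u x') k < sortedVec (expU u x) k) :
    ∀ x : S → ℝ, IsDistribution x →
      LeximinPref (expU u x') (fun i => α * expU u x i) := by
  intro x hx
  by_contra hpref
  obtain ⟨k, hbefore, hk⟩ := leximinStrict_of_not_leximinPref hpref
  rw [sortedVec_const_mul _ hα0.le] at hbefore hk
  have hx_nonneg := sortedVec_nonneg (expU_nonneg hu hx.1)
  refine hH ⟨x, hx, k, fun i hi => ?_, ?_⟩
  · rw [← hbefore i hi]
    exact mul_le_of_le_one_left (hx_nonneg i) hα1
  · rwa [one_div, inv_mul_lt_iff₀ hα0]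

/-- every Hartman-et-al. α-leximin-approximation is an
α-leximin-approximation in the sense of this paper. -/
theorem stmt17 {n : ℕ} (hn : 1 ≤ n) {S : Type*} [Fintype S]
    (u : Fin n → S → ℝ) (hu : ∀ i s, 0 ≤ u i s)
    (α : ℝ) (hα0 : 0 < α) (hα1 : α ≤ 1)
    (x' : S → ℝ) (hx' : IsDistribution x')
    (hH : ¬ ∃ x : S → ℝ, IsDistribution x ∧ ∃ k : Fin n,
        (∀ i, i < k → sortedVec (expU u x') i ≤ sortedVec (expU u x) i) ∧
        (1 / α) * sortedVec (expU u x') k < sortedVec (expU u x) k) :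
    ∀ x : S → ℝ, IsDistribution x →
      LeximinPref (expU u x') (fun i => α * expU u x i) :=
  stmt17_general u hu α hα0 hα1 x' hH
end
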